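/- Refining a nested tree decomposition strictly decreases its size: if D̄ = (T, B, 𝒟) is a nested decomposition whose root r satisfies |𝒟_r| > 0, D ∈ 𝒟_r, and σ is an ordered root set, then |D̄_{D,σ}| < |D̄|. -/

import Mathlib

variable {V : Type*} {ι : Type*}

/-- `(T, bags)` is a tree decomposition of `G`. -/
def IsTreeDecomp (G : SimpleGraph V) (T : SimpleGraph ι) (bags : ι → Set V) : Prop :=
  T.IsTree ∧
  (∀ v : V, (T.induce {n : ι | v ∈ bags n}).Connected) ∧
  (∀ u v : V, G.Adj u v → ∃ n : ι, u ∈ bags n ∧ v ∈ bags n)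

/-- Data of a finite tree decomposition (of a torso): a number of nodes, a tree on
them and bags. -/
abbrev TDData (V : Type*) : Type _ := Σ n : ℕ, SimpleGraph (Fin n) × (Fin n → Set V)

/-- The data of a rooted nested tree decomposition: a rooted tree with bags,
together with, for each node, a finite family of (data of) refining tree
decompositions. -/
structure PreNested (V : Type*) (ι : Type*) where
  T : SimpleGraph ι
  root : ι
  bags : ι → Set V
  fams : ι → Finset (TDData V)

/-- The torso of a node `n`: the graph on the bag of `n` whose edges are those of
`G` within the bag together with cliques on the adhesion sets. -/
def torsoGraph (G : SimpleGraph V) (D : PreNested V ι) (n : ι) : SimpleGraph V where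
  Adj u v := u ≠ v ∧ u ∈ D.bags n ∧ v ∈ D.bags n ∧
    (G.Adj u v ∨ ∃ m : ι, D.T.Adj n m ∧ u ∈ D.bags m ∧ v ∈ D.bags m)
  symm := by
    constructor
    rintro u v ⟨h1, h2, h3, h4⟩
    refine ⟨h1.symm, h3, h2, ?_⟩
    rcases h4 with h | ⟨m, hm, hu, hv⟩
    · exact Or.inl h.symm
    · exact Or.inr ⟨m, hm, hv, hu⟩
  loopless := by constructor; rintro u ⟨h, -⟩; exact h rfl

/-- `(T, bags)` is a tree decomposition of the part `A` of `H`: all bags are inside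
`A`, every vertex of `A` lies in a nonempty connected subtree of bags, and every
edge of `H` lies in one bag. -/
def IsTreeDecompOn {κ : Type*} (H : SimpleGraph V) (A : Set V)
    (T : SimpleGraph κ) (bags : κ → Set V) : Prop :=
  T.IsTree ∧ (∀ n : κ, bags n ⊆ A) ∧
  (∀ v ∈ A, (T.induce {n : κ | v ∈ bags n}).Connected) ∧
  (∀ u v : V, H.Adj u v → ∃ n : κ, u ∈ bags n ∧ v ∈ bags n)

/-- `D` is a nested tree decomposition of `G`: its tree and bags form a tree
decomposition and every member of each family is a tree decomposition of the
corresponding torso. -/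
def IsNested (G : SimpleGraph V) (D : PreNested V ι) : Prop :=
  IsTreeDecomp G D.T D.bags ∧
  ∀ n : ι, ∀ d ∈ D.fams n,
    IsTreeDecompOn (torsoGraph G D n) (D.bags n) d.2.1 d.2.2

/-- The size of a nested tree decomposition:
`Σ_n (1 + max { |D'| + 1 : D' ∈ 𝒟_n })`, the max being `0` for empty families. -/
noncomputable def nsize [Fintype ι] (D : PreNested V ι) : ℕ :=
  ∑ n : ι, (1 + (D.fams n).sup (fun d => d.1 + 1))

/-- Nodes of the refinement `D̄_{D,σ}`: the non-root nodes of `D̄`, the nodes of the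
refining decomposition `d`, and a new root node. -/
abbrev RefNode (D : PreNested V ι) (d : TDData V) : Type _ :=
  {i : ι // i ≠ D.root} ⊕ (Fin d.1 ⊕ Unit)

/-- The tree of the refinement: the old tree off the root, the tree of `d`, each
child `c` of the old root attached to a bag of `d` containing the adhesion set
(via the attachment map `att`), and the new root attached to a bag of `d`
containing the root set (via `attσ`). -/
def refineT (D : PreNested V ι) (d : TDData V)
    (att : {i : ι // i ≠ D.root} → Fin d.1) (attσ : Fin d.1) :
    SimpleGraph (RefNode D d) :=
  SimpleGraph.fromRel (fun x y =>
    (∃ i j : {i : ι // i ≠ D.root},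
        x = Sum.inl i ∧ y = Sum.inl j ∧ D.T.Adj i.val j.val) ∨
    (∃ a b : Fin d.1,
        x = Sum.inr (Sum.inl a) ∧ y = Sum.inr (Sum.inl b) ∧ d.2.1.Adj a b) ∨
    (∃ i : {i : ι // i ≠ D.root},
        x = Sum.inl i ∧ y = Sum.inr (Sum.inl (att i)) ∧ D.T.Adj D.root i.val) ∨
    (x = Sum.inr (Sum.inr ()) ∧ y = Sum.inr (Sum.inl attσ)))

/-- Bags of the refinement: old bags, bags of `d`, and the root set `σ` at the new
root. -/
def refineBags (D : PreNested V ι) (d : TDData V) (σ : List V) :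
    RefNode D d → Set V :=
  Sum.elim (fun i => D.bags i.val)
    (Sum.elim (fun a => d.2.2 a) (fun _ => {v : V | v ∈ σ}))

/-- Families of the refinement: inherited on old nodes, empty on new nodes. -/
def refineFams (D : PreNested V ι) (d : TDData V) :
    RefNode D d → Finset (TDData V) :=
  Sum.elim (fun i => D.fams i.val) (fun _ => (∅ : Finset (TDData V)))

/-- The refinement `D̄_{D,σ}` of a nested decomposition at its root. -/
def refined (D : PreNested V ι) (d : TDData V) (σ : List V)
    (att : {i : ι // i ≠ D.root} → Fin d.1) (attσ : Fin d.1) :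
    PreNested V (RefNode D d) :=
  ⟨refineT D d att attσ, Sum.inr (Sum.inr ()), refineBags D d σ, refineFams D d⟩

section

variable [Fintype ι] [DecidableEq ι]

theorem nsize_eq_add_sum_ne (D : PreNested V ι) (n : ι) :
    nsize D = (1 + (D.fams n).sup (fun e => e.1 + 1)) +
      ∑ i : {i : ι // i ≠ n}, (1 + (D.fams i).sup (fun e => e.1 + 1)) :=
  Fintype.sum_eq_add_sum_subtype_ne _ n

theorem nsize_refined (D : PreNested V ι) (d : TDData V) (σ : List V)
    (att : {i : ι // i ≠ D.root} → Fin d.1) (attσ : Fin d.1) :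
    nsize (refined D d σ att attσ) =
      (∑ i : {i : ι // i ≠ D.root}, (1 + (D.fams i).sup (fun e => e.1 + 1))) + (d.1 + 1) := by
  simp [nsize, refined, refineFams, Fintype.sum_sum_type, add_comm]

end

theorem stmt19_general [Fintype ι] [DecidableEq ι]
    (D : PreNested V ι)
    (d : TDData V) (hd : d ∈ D.fams D.root)
    (σ : List V)
    (att : {i : ι // i ≠ D.root} → Fin d.1)
    (attσ : Fin d.1) :
    nsize (refined D d σ att attσ) < nsize D := by
  have hd_le : d.1 + 1 ≤ (D.fams D.root).sup (fun e => e.1 + 1) :=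
    Finset.le_sup (f := fun e : TDData V => e.1 + 1) hd
  rw [nsize_refined, nsize_eq_add_sum_ne D D.root]
  omega

/-- Refining a nested tree decomposition at its root (by a member `d` of the root
family and an ordered root set `σ`) strictly decreases its size. -/
theorem stmt19 [Fintype V] [Fintype ι] [DecidableEq ι]
    (G : SimpleGraph V) (D : PreNested V ι) (hD : IsNested G D)
    (d : TDData V) (hd : d ∈ D.fams D.root)
    (σ : List V) (hσbag : ∀ v ∈ σ, v ∈ D.bags D.root)
    (hσ : ∀ d' ∈ D.fams D.root, ∃ b : Fin d'.1, ∀ v ∈ σ, v ∈ d'.2.2 b)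
    (att : {i : ι // i ≠ D.root} → Fin d.1)
    (hatt : ∀ i : {i : ι // i ≠ D.root}, D.T.Adj D.root i.val →
      D.bags D.root ∩ D.bags i.val ⊆ d.2.2 (att i))
    (attσ : Fin d.1) (hattσ : ∀ v ∈ σ, v ∈ d.2.2 attσ) :
    nsize (refined D d σ att attσ) < nsize D :=
  stmt19_general D d hd σ att attσ
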